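/- Let n ≥ 1, let D = {0,1} be the two-point discrete space, and let f : K_n × K_n → D be defined by f(i, j) = 1 if i = j and f(i, j) = 0 otherwise. Then H(f)(e_{K_n × K_n}(α)) = η_D(1) and H(H(f))(𝒜_n) = ℬ_n. -/

import Mathlib

open scoped Topology

/-- The index set `S(X)`: triples `(φ, a, b)` with `φ : X → ℝ` continuous and
`0 ≤ a < b ≤ 1`. -/
structure SIdx (X : Type u) [TopologicalSpace X] : Type u where
  φ : C(X, ℝ)
  a : ℝ
  b : ℝ
  ha : 0 ≤ a
  hab : a < b
  hb : b ≤ 1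

/-- `α : ℝ → X` is a step function on `[0,1)`: there is a partition
`0 = t 0 < t 1 < ⋯ < t k = 1` with `α` constant on each `[t j, t (j+1))`. -/
def IsStep {X : Type u} (α : ℝ → X) : Prop :=
  ∃ (k : ℕ) (t : ℕ → ℝ), 1 ≤ k ∧ t 0 = 0 ∧ t k = 1 ∧ (∀ j < k, t j < t (j + 1)) ∧
    ∀ j < k, ∀ s ∈ Set.Ico (t j) (t (j + 1)), α s = α (t j)

/-- The embedding `e_X`, sending `α` to the point of `∏_{S(X)} ℝ` whose
`(φ, a, b)`-coordinate is `(1/(b-a)) ∫_a^b φ(α t) dt`. -/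
noncomputable def eHM {X : Type u} [TopologicalSpace X] (α : ℝ → X) : SIdx X → ℝ :=
  fun s => (1 / (s.b - s.a)) * ∫ t in s.a..s.b, s.φ (α t)

/-- `H(X)` as a subset of `∏_{S(X)} ℝ`: the closure of the image under `e_X`
of the set of step functions. -/
def HSet (X : Type u) [TopologicalSpace X] : Set (SIdx X → ℝ) :=
  closure (eHM '' {α : ℝ → X | IsStep α})

/-- `H(X)` as a topological space (subspace of the product `∏_{S(X)} ℝ`). -/
abbrev HSp (X : Type u) [TopologicalSpace X] : Type u := ↥(HSet X)

/-- `H_X(A)`: the closure of the image under `e_X` of the step functions taking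
values in `A` on `[0,1)`. -/
def HSetOn (X : Type u) [TopologicalSpace X] (A : Set X) : Set (SIdx X → ℝ) :=
  closure (eHM '' {α : ℝ → X | IsStep α ∧ ∀ t ∈ Set.Ico (0:ℝ) 1, α t ∈ A})

/-- The support of `ν`: the intersection of all closed `A ⊆ X` with `ν ∈ H_X(A)`. -/
def suppH {X : Type u} [TopologicalSpace X] (ν : SIdx X → ℝ) : Set X :=
  ⋂₀ {A : Set X | IsClosed A ∧ ν ∈ HSetOn X A}

/-- The reindexing map `R_f : ∏_{S(X)} ℝ → ∏_{S(Y)} ℝ`, `R_f x (ψ,a,b) = x (ψ∘f,a,b)`. -/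
def reindex {X : Type u} {Y : Type v} [TopologicalSpace X] [TopologicalSpace Y]
    (f : C(X, Y)) : (SIdx X → ℝ) → (SIdx Y → ℝ) :=
  fun x s => x ⟨s.φ.comp f, s.a, s.b, s.ha, s.hab, s.hb⟩

lemma isStep_comp {X : Type u} {Y : Type v} (f : X → Y) {α : ℝ → X} (h : IsStep α) :
    IsStep (f ∘ α) := by
  obtain ⟨k, t, hk, h0, h1, hm, hc⟩ := h
  exact ⟨k, t, hk, h0, h1, hm, fun j hj s hs => congrArg f (hc j hj s hs)⟩

lemma isStep_const {X : Type u} (x : X) : IsStep (fun _ : ℝ => x) :=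
  ⟨1, fun j => (j : ℝ), le_refl 1, by simp, by simp,
    fun j _ => by simp, fun _ _ _ _ => rfl⟩

/-- The point `e_X(α)` of `H(X)`, for a step function `α`. -/
noncomputable def toH {X : Type u} [TopologicalSpace X] (α : ℝ → X) (h : IsStep α) : HSp X :=
  ⟨eHM α, subset_closure ⟨α, h, rfl⟩⟩

lemma continuous_reindex {X : Type u} {Y : Type v} [TopologicalSpace X] [TopologicalSpace Y]
    (f : C(X, Y)) : Continuous (reindex f) :=
  continuous_pi fun _ => continuous_apply _

lemma reindex_mapsTo {X : Type u} {Y : Type v} [TopologicalSpace X] [TopologicalSpace Y]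
    (f : C(X, Y)) : Set.MapsTo (reindex f) (HSet X) (HSet Y) := by
  intro x hx
  have h2 := image_closure_subset_closure_image (s := eHM '' {α : ℝ → X | IsStep α})
    (continuous_reindex f)
  have h3 : reindex f '' (eHM '' {α : ℝ → X | IsStep α}) ⊆ eHM '' {α : ℝ → Y | IsStep α} := by
    rintro _ ⟨_, ⟨α, hα, rfl⟩, rfl⟩
    exact ⟨f ∘ α, isStep_comp f hα, rfl⟩
  exact closure_mono h3 (h2 ⟨x, hx, rfl⟩)

/-- The map `H(f) : H(X) → H(Y)` induced by a continuous `f : X → Y`, i.e. the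
restriction of the reindexing map `R_f`. -/
noncomputable def Hmap {X : Type u} {Y : Type v} [TopologicalSpace X] [TopologicalSpace Y]
    (f : C(X, Y)) : C(HSp X, HSp Y) where
  toFun x := ⟨reindex f x.1, reindex_mapsTo f x.2⟩
  continuous_toFun :=
    Continuous.subtype_mk ((continuous_reindex f).comp continuous_subtype_val) _

/-- The unit `η_X : X → H(X)`, `x ↦ e_X(const x)`. -/
noncomputable def etaMap (X : Type u) [TopologicalSpace X] : C(X, HSp X) where
  toFun x := toH (fun _ : ℝ => x) (isStep_const x)
  continuous_toFun := by
    refine Continuous.subtype_mk (continuous_pi fun s => ?_) _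
    simp only [eHM, intervalIntegral.integral_const]
    exact continuous_const.mul ((s.φ.continuous).const_smul (s.b - s.a))
/-- The index (0-based) of the subinterval `[i/n, (i+1)/n)` of `[0,1)` containing `s`
(as a natural number, clipped to `n - 1`). -/
noncomputable def stepIdxNat (n : ℕ) (s : ℝ) : ℕ := min ⌊s * n⌋₊ (n - 1)

lemma stepIdxNat_eq {n j : ℕ} (hj : j < n) {s : ℝ}
    (h1 : (j : ℝ) / n ≤ s) (h2 : s < ((j : ℝ) + 1) / n) : stepIdxNat n s = j := by
  have hn : (0:ℝ) < n := by
    have : 0 < n := by omega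
    exact_mod_cast this
  have h1' : (j : ℝ) ≤ s * n := by rw [div_le_iff₀ hn] at h1; exact h1
  have h2' : s * n < (j : ℝ) + 1 := by rw [lt_div_iff₀ hn] at h2; exact h2
  have hfl : ⌊s * n⌋₊ = j := by
    rw [Nat.floor_eq_iff (le_trans (Nat.cast_nonneg j) h1')]
    exact ⟨h1', h2'⟩
  unfold stepIdxNat
  omega

lemma isStep_stepIdxNat (n : ℕ) : IsStep (stepIdxNat n) := by
  rcases Nat.eq_zero_or_pos n with rfl | hn
  · exact ⟨1, fun j => (j : ℝ), le_refl 1, by simp, by simp, fun j _ => by simp,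
      fun j hj s hs => by simp [stepIdxNat]⟩
  · have hnR : (0:ℝ) < n := by exact_mod_cast hn
    refine ⟨n, fun j => (j : ℝ) / n, hn, by simp, by field_simp,
      fun j hj => ?_, fun j hj s hs => ?_⟩
    · exact (div_lt_div_iff_of_pos_right hnR).mpr (by push_cast; linarith)
    · obtain ⟨hs1, hs2⟩ := hs
      have hs2' : s < ((j : ℝ) + 1) / n := by
        convert hs2 using 2
        all_goals (push_cast; first | rfl | ring)
      rw [stepIdxNat_eq hj hs1 hs2',
        stepIdxNat_eq hj (le_refl _) ((div_lt_div_iff_of_pos_right hnR).mpr (by linarith))]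
/-- The step function `β : [0,1) → K_n`, `β(s) = i` for `s ∈ [i/n, (i+1)/n)`,
with `K_n` realized as `Fin n` (0-based indexing). -/
noncomputable def stepIdx (n : ℕ) [NeZero n] (s : ℝ) : Fin n :=
  ⟨stepIdxNat n s, by
    have := NeZero.ne n
    unfold stepIdxNat
    omega⟩

lemma isStep_stepIdx (n : ℕ) [NeZero n] : IsStep (stepIdx n) := by
  have hn := NeZero.ne n
  have h : stepIdx n =
      (fun m : ℕ => (⟨min m (n - 1), by omega⟩ : Fin n)) ∘ stepIdxNat n := by
    funext s
    apply Fin.ext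
    simp [stepIdx, stepIdxNat, min_assoc]
  rw [h]
  exact isStep_comp _ (isStep_stepIdxNat n)

/-- The diagonal step function `α : [0,1) → K_n × K_n`, `α(s) = (i,i)` for
`s ∈ [i/n, (i+1)/n)`. -/
noncomputable def alphaDiag (n : ℕ) [NeZero n] : ℝ → Fin n × Fin n :=
  fun s => (stepIdx n s, stepIdx n s)

lemma isStep_alphaDiag (n : ℕ) [NeZero n] : IsStep (alphaDiag n) :=
  isStep_comp (fun i : Fin n => (i, i)) (isStep_stepIdx n)

/-- The step function `α_i : [0,1) → K_n × K_n`, `α_i(s) = (i,j)` for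
`s ∈ [j/n, (j+1)/n)`. -/
noncomputable def alphaRow (n : ℕ) [NeZero n] (i : Fin n) : ℝ → Fin n × Fin n :=
  fun s => (i, stepIdx n s)

lemma isStep_alphaRow (n : ℕ) [NeZero n] (i : Fin n) : IsStep (alphaRow n i) :=
  isStep_comp (fun j : Fin n => (i, j)) (isStep_stepIdx n)

/-- The step function `A_n : [0,1) → H(K_n × K_n)`, `A_n(s) = e(α_i)` for
`s ∈ [i/n, (i+1)/n)`. -/
noncomputable def An (n : ℕ) [NeZero n] : ℝ → HSp (Fin n × Fin n) :=
  fun s => toH (alphaRow n (stepIdx n s)) (isStep_alphaRow n _)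

lemma isStep_An (n : ℕ) [NeZero n] : IsStep (An n) :=
  isStep_comp (fun i : Fin n => toH (alphaRow n i) (isStep_alphaRow n i)) (isStep_stepIdx n)

/-- The step function `γ_i^{(n)} : [0,1) → D = {0,1}` which is `1` on
`[i/n, (i+1)/n)` and `0` elsewhere, with `D` realized as `Bool`. -/
noncomputable def gammaStep (n i : ℕ) : ℝ → Bool := fun s => decide (stepIdxNat n s = i)

lemma isStep_gammaStep (n i : ℕ) : IsStep (gammaStep n i) :=
  isStep_comp (fun m : ℕ => decide (m = i)) (isStep_stepIdxNat n)

/-- The step function `B_n : [0,1) → H(D)`, `B_n(s) = e(γ_i^{(n)})` for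
`s ∈ [i/n, (i+1)/n)`. -/
noncomputable def Bn (n : ℕ) : ℝ → HSp Bool :=
  fun s => toH (gammaStep n (stepIdxNat n s)) (isStep_gammaStep n _)

lemma isStep_Bn (n : ℕ) : IsStep (Bn n) :=
  isStep_comp (fun m : ℕ => toH (gammaStep n m) (isStep_gammaStep n m)) (isStep_stepIdxNat n)

/-! `H(f)` acts on `e(α)` by post-composition, `H(f)(e(α)) = e(f ∘ α)`, so both identities reduce
to identities of step functions: `f ∘ α ≡ 1`, and `f ∘ α_i = γ_i`, whence `H(f) ∘ A_n = B_n`. -/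

section

variable {X : Type u} {Y : Type v} [TopologicalSpace X] [TopologicalSpace Y]

theorem toH_congr {α β : ℝ → X} (hα : IsStep α) (hβ : IsStep β) (h : α = β) :
    toH α hα = toH β hβ := by
  subst h
  rfl

theorem Hmap_toH (f : C(X, Y)) {α : ℝ → X} (hα : IsStep α) :
    Hmap f (toH α hα) = toH (f ∘ α) (isStep_comp f hα) :=
  rfl

end

def diagIndicator (n : ℕ) : C(Fin n × Fin n, Bool) :=
  ⟨fun p => decide (p.1 = p.2), continuous_of_discreteTopology⟩

theorem diagIndicator_comp_alphaDiag (n : ℕ) [NeZero n] :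
    diagIndicator n ∘ alphaDiag n = fun _ => true := by
  funext s
  simp [diagIndicator, alphaDiag]

theorem diagIndicator_comp_alphaRow (n : ℕ) [NeZero n] (i : Fin n) :
    diagIndicator n ∘ alphaRow n i = gammaStep n i := by
  funext s
  exact decide_eq_decide.2 (Fin.ext_iff.trans eq_comm)

theorem Hmap_diagIndicator_comp_An (n : ℕ) [NeZero n] :
    Hmap (diagIndicator n) ∘ An n = Bn n := by
  funext s
  exact (Hmap_toH _ _).trans (toH_congr _ _ (diagIndicator_comp_alphaRow n _))

/-- For `f : K_n × K_n → D` the indicator of the diagonal (`D = {0,1}` realized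
as `Bool`), `H(f)(e(α)) = η_D(1)` and `H(H(f))(𝒜_n) = ℬ_n`. -/
theorem Hf_alpha_and_HHf_An (n : ℕ) [NeZero n] :
    Hmap (⟨fun p : Fin n × Fin n => decide (p.1 = p.2), continuous_of_discreteTopology⟩ :
        C(Fin n × Fin n, Bool)) (toH (alphaDiag n) (isStep_alphaDiag n)) =
      etaMap Bool true ∧
    Hmap (Hmap (⟨fun p : Fin n × Fin n => decide (p.1 = p.2),
        continuous_of_discreteTopology⟩ : C(Fin n × Fin n, Bool)))
        (toH (An n) (isStep_An n)) =
      toH (Bn n) (isStep_Bn n) := by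
  refine ⟨?_, ?_⟩
  · exact (Hmap_toH (diagIndicator n) _).trans
      (toH_congr _ (isStep_const true) (diagIndicator_comp_alphaDiag n))
  · exact (Hmap_toH (Hmap (diagIndicator n)) _).trans
      (toH_congr _ _ (Hmap_diagIndicator_comp_An n))
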